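/- Suppose H_K(D) is continuously embedded into H^m(D), with Mercer eigenvalues λ_k summable and λ_k ‖e_k‖²_{H^m} ≤ C². Then the integral-type kernel K*(x,y) = Σ_k λ_k² e_k(x)e_k(y) belongs to the mixed Sobolev space H^{m,m}(D × D); specifically, for all multi-indices |α| ≤ m, |β| ≤ m, the series Σ_k λ_k² D^α e_k(x) D^β e_k(y) converges in L²(D × D) with ‖Σ_k λ_k² D^α e_k ⊗ D^β e_k‖_{L²(D×D)} ≤ C² Σ_k λ_k. -/

import Mathlib

/-!
Each term `g k` is an elementary tensor, so by Tonelli its `L²(D×D)` norm is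
`λ_k² ‖D^α e_k‖ ‖D^β e_k‖ ≤ λ_k² · C²/λ_k = C² λ_k`. The series therefore converges absolutely
in the complete space `L²(D×D)`, and its sum is bounded by `C² ∑ λ_k`.
-/

open MeasureTheory
open scoped ENNReal

theorem eLpNorm_prod_mul {α β 𝕜 : Type*} [MeasurableSpace α] [MeasurableSpace β]
    [NormedDivisionRing 𝕜] {μ : Measure α} {ν : Measure β} [SFinite ν]
    {p : ℝ≥0∞} (hp0 : p ≠ 0) (hp : p ≠ ∞) {f : α → 𝕜} {g : β → 𝕜}
    (hf : AEStronglyMeasurable f μ) (hg : AEStronglyMeasurable g ν) :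
    eLpNorm (fun z : α × β => f z.1 * g z.2) p (μ.prod ν) = eLpNorm f p μ * eLpNorm g p ν := by
  simp only [eLpNorm_eq_lintegral_rpow_enorm_toReal hp0 hp, enorm_mul,
    ENNReal.mul_rpow_of_nonneg _ _ ENNReal.toReal_nonneg]
  rw [lintegral_prod_mul (hf.enorm.pow_const _) (hg.enorm.pow_const _),
    ENNReal.mul_rpow_of_nonneg _ _ (by positivity)]

theorem Lp.norm_eq_of_ae_eq_const_mul_prod_mul {α β 𝕜 : Type*} [MeasurableSpace α]
    [MeasurableSpace β] [NormedDivisionRing 𝕜] {μ : Measure α} {ν : Measure β} [SFinite ν]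
    {p : ℝ≥0∞} [Fact (1 ≤ p)] (hp : p ≠ ∞) (c : 𝕜) (f : Lp 𝕜 p μ) (g : Lp 𝕜 p ν)
    (h : Lp 𝕜 p (μ.prod ν)) (hh : h =ᵐ[μ.prod ν] fun z => c * f z.1 * g z.2) :
    ‖h‖ = ‖c‖ * ‖f‖ * ‖g‖ := by
  have hp0 : p ≠ 0 := (zero_lt_one.trans_le Fact.out).ne'
  have hcf : eLpNorm (fun x => c * f x) p μ = ‖c‖ₑ * eLpNorm f p μ :=
    eLpNorm_const_smul c f p μ
  rw [Lp.norm_def, eLpNorm_congr_ae hh,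
    eLpNorm_prod_mul hp0 hp ((Lp.aestronglyMeasurable f).const_mul c) (Lp.aestronglyMeasurable g)]
  simp only [hcf, ENNReal.toReal_mul, toReal_enorm, Lp.norm_def]

theorem stmt_13_general (d : ℕ) (D : Set (EuclideanSpace ℝ (Fin d)))
    (lam : ℕ → ℝ) (hlam_pos : ∀ k, 0 < lam k) (hlam_sum : Summable lam)
    (C : ℝ)
    -- `fα k = D^α e_k` and `fβ k = D^β e_k` as elements of `L²(D)`, satisfying
    -- the bound `λ_k ‖e_k‖²_{H^m} ≤ C²` inherited from the embedding
    (fα fβ : ℕ → Lp ℝ 2 (volume.restrict D))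
    (hfα : ∀ k, ‖fα k‖ ^ 2 ≤ C ^ 2 / lam k)
    (hfβ : ∀ k, ‖fβ k‖ ^ 2 ≤ C ^ 2 / lam k)
    -- `g k` is the tensor-product term `λ_k² D^α e_k ⊗ D^β e_k` in `L²(D×D)`
    (g : ℕ → Lp ℝ 2 ((volume.restrict D).prod (volume.restrict D)))
    (hg : ∀ k, (g k : EuclideanSpace ℝ (Fin d) × EuclideanSpace ℝ (Fin d) → ℝ)
      =ᵐ[(volume.restrict D).prod (volume.restrict D)]
        fun p => (lam k) ^ 2 * (fα k : EuclideanSpace ℝ (Fin d) → ℝ) p.1 *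
          (fβ k : EuclideanSpace ℝ (Fin d) → ℝ) p.2) :
    ∃ F : Lp ℝ 2 ((volume.restrict D).prod (volume.restrict D)),
      HasSum g F ∧ ‖F‖ ≤ C ^ 2 * ∑' k, lam k := by
  have hterm : ∀ k, ‖g k‖ ≤ C ^ 2 * lam k := fun k => by
    have hlam := hlam_pos k
    have hprod : ‖fα k‖ * ‖fβ k‖ ≤ C ^ 2 / lam k := by
      nlinarith [two_mul_le_add_sq ‖fα k‖ ‖fβ k‖, hfα k, hfβ k]
    calc ‖g k‖ = lam k ^ 2 * (‖fα k‖ * ‖fβ k‖) := by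
          rw [Lp.norm_eq_of_ae_eq_const_mul_prod_mul ENNReal.ofNat_ne_top _ _ _ _ (hg k),
            norm_pow, Real.norm_of_nonneg hlam.le, mul_assoc]
      _ ≤ lam k ^ 2 * (C ^ 2 / lam k) := by gcongr
      _ = C ^ 2 * lam k := by field_simp
  have hbound := hlam_sum.mul_left (C ^ 2)
  refine ⟨_, (hbound.of_norm_bounded hterm).hasSum, ?_⟩
  rw [← tsum_mul_left]
  exact tsum_of_norm_bounded hbound.hasSum hterm

/-- if `H_K(D) ↪ H^m(D)` with constant `C` and summable Mercer
eigenvalues `λ_k`, then for multi-indices `|α|, |β| ≤ m` the series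
`∑_k λ_k² D^α e_k ⊗ D^β e_k` (with `‖D^α e_k‖_{L²} ≤ ‖e_k‖_{H^m}`, so
`‖D^α e_k‖²_{L²} ≤ C²/λ_k`) converges in `L²(D×D)` with limit of norm at most
`C² ∑_k λ_k`; hence `K* ∈ H^{m,m}(D×D)`. -/
theorem stmt_13 (d : ℕ) (D : Set (EuclideanSpace ℝ (Fin d)))
    (hDopen : IsOpen D) (hDbdd : Bornology.IsBounded D)
    (lam : ℕ → ℝ) (hlam_pos : ∀ k, 0 < lam k) (hlam_sum : Summable lam)
    (C : ℝ) (hC : 0 < C)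
    -- `fα k = D^α e_k` and `fβ k = D^β e_k` as elements of `L²(D)`, satisfying
    -- the bound `λ_k ‖e_k‖²_{H^m} ≤ C²` inherited from the embedding
    (fα fβ : ℕ → Lp ℝ 2 (volume.restrict D))
    (hfα : ∀ k, ‖fα k‖ ^ 2 ≤ C ^ 2 / lam k)
    (hfβ : ∀ k, ‖fβ k‖ ^ 2 ≤ C ^ 2 / lam k)
    -- `g k` is the tensor-product term `λ_k² D^α e_k ⊗ D^β e_k` in `L²(D×D)`
    (g : ℕ → Lp ℝ 2 ((volume.restrict D).prod (volume.restrict D)))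
    (hg : ∀ k, (g k : EuclideanSpace ℝ (Fin d) × EuclideanSpace ℝ (Fin d) → ℝ)
      =ᵐ[(volume.restrict D).prod (volume.restrict D)]
        fun p => (lam k) ^ 2 * (fα k : EuclideanSpace ℝ (Fin d) → ℝ) p.1 *
          (fβ k : EuclideanSpace ℝ (Fin d) → ℝ) p.2) :
    ∃ F : Lp ℝ 2 ((volume.restrict D).prod (volume.restrict D)),
      HasSum g F ∧ ‖F‖ ≤ C ^ 2 * ∑' k, lam k :=
  stmt_13_general d D lam hlam_pos hlam_sum C fα fβ hfα hfβ g hg
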